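/- Let a ≥ 0 be real and let T_a be the unique analytic function on ℂ∖(−∞,−1] agreeing with x ↦ cos(a·arccos x) on (−1,1]. Then, as z → −1 within ℂ∖(−∞,−1], T_a(z) − cos(aπ) − a√2·sin(aπ)·√(z+1) = O(z+1), where √ denotes the principal complex square root. -/

import Mathlib

open Asymptotics Filter

/-- The cut plane `ℂ ∖ (−∞, −1]`. -/
def cutC : Set ℂ := {z : ℂ | z.im = 0 ∧ z.re ≤ -1}ᶜ

/-- `T` is an analytic function on the cut plane `ℂ ∖ (−∞, −1]` agreeing with
`x ↦ cos (a · arccos x)` on `(−1, 1]`. -/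
def IsChebyshev (a : ℝ) (T : ℂ → ℂ) : Prop :=
  (∀ z ∈ cutC, DifferentiableAt ℂ T z) ∧
  ∀ x : ℝ, x ∈ Set.Ioc (-1 : ℝ) 1 → T (x : ℂ) = ((Real.cos (a * Real.arccos x) : ℝ) : ℂ)

/-!
Substituting `z = w ^ 2 - 1` with `0 < re w` uniformizes the branch point at `-1`. For small real
`w > 0` we have `arccos (w ^ 2 - 1) = π - arccos (1 - w ^ 2)` and
`exp (-i arccos (1 - w ^ 2)) = 1 - w ^ 2 - i w √(2 - w ^ 2)`, so `T (w ^ 2 - 1) = cos (a θ w)` with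
`θ w = π - i log (1 - w ^ 2 - i w √(2 - w ^ 2))`, a function analytic at `w = 0`. By the identity
theorem this holds on a half-disc around `0`. Since `θ 0 = π` and `θ' 0 = -√2`, the second-order
Taylor expansion of `cos (a θ w)` at `0`, evaluated at `w = √(z + 1)`, is the claimed expansion.
-/

open Topology

theorem AnalyticAt.isBigO_sub_sub_smul_deriv {𝕜 E : Type*} [NontriviallyNormedField 𝕜]
    [NormedAddCommGroup E] [NormedSpace 𝕜 E] {f : 𝕜 → E} {c : 𝕜} (hf : AnalyticAt 𝕜 f c) :
    (fun w => f w - f c - (w - c) • deriv f c) =O[𝓝 c] fun w => (w - c) ^ 2 := by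
  obtain ⟨p, hp⟩ := hf
  have hd : DifferentiableAt 𝕜 (dslope f c) c :=
    hp.has_fpower_series_dslope_fslope.differentiableAt
  have key (w : 𝕜) : f w - f c - (w - c) • deriv f c = (w - c) • (dslope f c w - dslope f c c) := by
    rw [smul_sub, sub_smul_dslope, dslope_same]
  simp_rw [key, sq]
  exact (isBigO_refl (fun w => w - c) _).smul hd.isBigO_sub

section

open Complex

lemma mem_cutC_iff {z : ℂ} : z ∈ cutC ↔ z + 1 ∈ slitPlane := by
  simp only [cutC, Set.mem_compl_iff, Set.mem_ofPred_eq, mem_slitPlane_iff, add_re, one_re,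
    add_im, one_im, add_zero]
  constructor
  · intro h
    by_contra! h'
    exact h ⟨h'.2, by linarith [h'.1]⟩
  · rintro (h | h) ⟨h1, h2⟩
    · linarith
    · exact h h1

lemma isOpen_cutC : IsOpen cutC := by
  have : cutC = (· + 1) ⁻¹' slitPlane := Set.ext fun _ => mem_cutC_iff
  exact this ▸ isOpen_slitPlane.preimage (continuous_add_const 1)

lemma sq_sub_one_mem_cutC {w : ℂ} (hw : 0 < w.re) : w ^ 2 - 1 ∈ cutC := by
  rw [mem_cutC_iff, sub_add_cancel, mem_slitPlane_iff, sq, mul_re, mul_im]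
  by_cases h : w.im = 0
  · left
    simp only [h, mul_zero, sub_zero]
    positivity
  · right
    rw [mul_comm w.im, ← two_mul]
    exact mul_ne_zero two_ne_zero (mul_ne_zero hw.ne' h)

lemma re_cpow_one_div_two_pos {v : ℂ} (hv : v ∈ slitPlane) : 0 < (v ^ (1 / 2 : ℂ)).re := by
  rw [one_div, cpow_inv_two_re, Real.sqrt_pos]
  rcases mem_slitPlane_iff.mp hv with h | h
  · linarith [re_le_norm v]
  · have := abs_re_lt_norm.mpr h
    linarith [neg_abs_le v.re]

lemma tendsto_add_one_cpow_one_div_two_cutC :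
    Tendsto (fun z : ℂ => (z + 1) ^ (1 / 2 : ℂ)) (𝓝[cutC] (-1)) (𝓝[{w | 0 < w.re}] 0) := by
  refine tendsto_nhdsWithin_iff.mpr ⟨?_, ?_⟩
  · have hcont : ContinuousAt (fun v : ℂ => v ^ (1 / 2 : ℂ)) 0 :=
      continuousAt_cpow_const_of_re_pos (by simp) (by norm_num)
    have := hcont.tendsto.comp ((continuous_add_const (1 : ℂ)).tendsto' (-1) 0 (by simp))
    rw [zero_cpow (by norm_num)] at this
    exact this.mono_left nhdsWithin_le_nhds
  · filter_upwards [self_mem_nhdsWithin] with z hz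
    exact re_cpow_one_div_two_pos (mem_cutC_iff.mp hz)

lemma ofReal_cpow_one_div_two {r : ℝ} (hr : 0 ≤ r) : (r : ℂ) ^ (1 / 2 : ℂ) = √r := by
  rw [Real.sqrt_eq_rpow, ofReal_cpow hr]
  norm_num

noncomputable def arccosPhase (w : ℂ) : ℂ := 1 - w ^ 2 - I * w * (2 - w ^ 2) ^ (1 / 2 : ℂ)

noncomputable def arccosSqSubOne (w : ℂ) : ℂ := Real.pi - I * log (arccosPhase w)

lemma arccosPhase_ofReal {x : ℝ} (hx0 : 0 ≤ x) (hx2 : x ^ 2 ≤ 2) :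
    arccosPhase x = exp (-(Real.arccos (1 - x ^ 2) : ℂ) * I) := by
  set φ := Real.arccos (1 - x ^ 2)
  have hcos : Real.cos φ = 1 - x ^ 2 := Real.cos_arccos (by nlinarith) (by nlinarith)
  have hsin : Real.sin φ = x * √(2 - x ^ 2) := by
    rw [Real.sin_arccos, show 1 - (1 - x ^ 2) ^ 2 = x ^ 2 * (2 - x ^ 2) by ring,
      Real.sqrt_mul (sq_nonneg x), Real.sqrt_sq hx0]
  have hsqrt : (2 - (x : ℂ) ^ 2) ^ (1 / 2 : ℂ) = (√(2 - x ^ 2) : ℝ) := by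
    exact_mod_cast ofReal_cpow_one_div_two (sub_nonneg.mpr hx2)
  rw [arccosPhase, hsqrt, ← ofReal_neg, exp_mul_I, ← ofReal_cos, ← ofReal_sin, Real.cos_neg,
    Real.sin_neg, hcos, hsin]
  push_cast
  ring

lemma arccosSqSubOne_ofReal {x : ℝ} (hx0 : 0 ≤ x) (hx2 : x ^ 2 < 2) :
    arccosSqSubOne x = Real.arccos (x ^ 2 - 1) := by
  have hφ0 := Real.arccos_nonneg (1 - x ^ 2)
  have hφπ : Real.arccos (1 - x ^ 2) < Real.pi := Real.arccos_lt_pi.mpr (by linarith)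
  rw [arccosSqSubOne, arccosPhase_ofReal hx0 hx2.le,
    log_exp (by simpa using hφπ) (by simp; linarith), show x ^ 2 - 1 = -(1 - x ^ 2) by ring,
    Real.arccos_neg]
  push_cast
  linear_combination (Real.arccos (1 - x ^ 2) : ℂ) * I_sq

lemma arccosPhase_zero : arccosPhase 0 = 1 := by simp [arccosPhase]

lemma arccosSqSubOne_zero : arccosSqSubOne 0 = Real.pi := by simp [arccosSqSubOne, arccosPhase_zero]

lemma analyticAt_arccosSqSubOne : AnalyticAt ℂ arccosSqSubOne 0 := by
  have h2 : AnalyticAt ℂ (fun w : ℂ => (2 - w ^ 2) ^ (1 / 2 : ℂ)) 0 :=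
    AnalyticAt.cpow (by fun_prop) analyticAt_const (by simp)
  have hphase : AnalyticAt ℂ arccosPhase 0 := by unfold arccosPhase; fun_prop
  unfold arccosSqSubOne
  exact analyticAt_const.sub (analyticAt_const.mul (hphase.clog (by simp [arccosPhase_zero])))

lemma hasDerivAt_arccosSqSubOne : HasDerivAt arccosSqSubOne (-√2) 0 := by
  have hsqrt : HasDerivAt (fun w : ℂ => (2 - w ^ 2) ^ (1 / 2 : ℂ)) _ 0 :=
    (((hasDerivAt_id 0).pow 2).const_sub 2).cpow_const (by simp)
  have hphase : HasDerivAt arccosPhase (-I * √2) 0 := by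
    refine ((((hasDerivAt_id 0).pow 2).const_sub 1).sub
      (((hasDerivAt_id 0).const_mul I).mul hsqrt)).congr_deriv ?_
    simpa using ofReal_cpow_one_div_two zero_le_two
  refine (((hphase.clog (by simp [arccosPhase_zero])).const_mul I).const_sub
    (Real.pi : ℂ)).congr_deriv ?_
  simp [arccosPhase_zero, ← mul_assoc]

lemma isBigO_cos_mul_arccosSqSubOne (a : ℝ) :
    (fun w => cos (a * arccosSqSubOne w) - ((Real.cos (a * Real.pi) : ℝ) : ℂ)
        - ((a * √2 * Real.sin (a * Real.pi) : ℝ) : ℂ) * w) =O[𝓝 0] (· ^ 2) := by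
  have hderiv := (hasDerivAt_arccosSqSubOne.const_mul (a : ℂ)).ccos
  have hanalytic : AnalyticAt ℂ (fun w => cos (a * arccosSqSubOne w)) 0 :=
    analyticAt_cos.comp (analyticAt_const.mul analyticAt_arccosSqSubOne)
  have h := hanalytic.isBigO_sub_sub_smul_deriv
  rw [hderiv.deriv, arccosSqSubOne_zero] at h
  refine h.congr (fun w => ?_) (fun w => by rw [sub_zero])
  push_cast
  ring

namespace IsChebyshev

variable {a : ℝ} {T : ℂ → ℂ}

lemma analyticOnNhd (hT : IsChebyshev a T) : AnalyticOnNhd ℂ T cutC :=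
  fun _ hz => DifferentiableOn.analyticAt (fun w hw => (hT.1 w hw).differentiableWithinAt)
    (isOpen_cutC.mem_nhds hz)

lemma apply_sq_sub_one_ofReal (hT : IsChebyshev a T) {x : ℝ} (hx0 : 0 < x) (hx1 : x < 1) :
    T ((x : ℂ) ^ 2 - 1) = cos (a * arccosSqSubOne x) := by
  have hx2 : 0 < x ^ 2 := by positivity
  have hx2_lt : x ^ 2 < 1 := by nlinarith
  have h := hT.2 (x ^ 2 - 1) ⟨by linarith, by linarith⟩
  push_cast at h
  rw [h, arccosSqSubOne_ofReal hx0.le (by linarith), ← ofReal_mul, ← ofReal_cos]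

theorem eventually_apply_sq_sub_one_eq (hT : IsChebyshev a T) :
    ∀ᶠ w in 𝓝[{w | 0 < w.re}] 0, T (w ^ 2 - 1) = cos (a * arccosSqSubOne w) := by
  obtain ⟨r, hr, hball⟩ := Metric.mem_nhds_iff.mp
    ((analyticAt_arccosSqSubOne.eventually_analyticAt).and (Metric.ball_mem_nhds 0 one_pos))
  set D := {w : ℂ | 0 < w.re} ∩ Metric.ball 0 r
  have hf : AnalyticOnNhd ℂ (fun w => T (w ^ 2 - 1)) D := fun w hw =>
    (hT.analyticOnNhd _ (sq_sub_one_mem_cutC hw.1)).comp (f := fun w : ℂ => w ^ 2 - 1)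
      (by fun_prop)
  have hg : AnalyticOnNhd ℂ (fun w => cos (a * arccosSqSubOne w)) D := fun w hw =>
    analyticAt_cos.comp (analyticAt_const.mul (hball hw.2).1)
  have hD : IsPreconnected D := ((convex_halfSpace_re_gt 0).inter (convex_ball 0 r)).isPreconnected
  have hofReal_mem {t : ℝ} (ht : t ∈ Set.Ioo 0 r) : (t : ℂ) ∈ D := by
    refine ⟨by simpa using ht.1, ?_⟩
    simpa [abs_of_pos ht.1] using ht.2
  have hfreq : ∃ᶠ w in 𝓝[≠] ((r / 2 : ℝ) : ℂ), T (w ^ 2 - 1) = cos (a * arccosSqSubOne w) := by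
    have htendsto : Tendsto ((↑) : ℝ → ℂ) (𝓝[≠] (r / 2)) (𝓝[≠] ((r / 2 : ℝ) : ℂ)) :=
      continuous_ofReal.continuousWithinAt.tendsto_nhdsWithin fun _ ht h => ht (ofReal_injective h)
    refine htendsto.frequently (Eventually.frequently ?_)
    filter_upwards [nhdsWithin_le_nhds (Ioo_mem_nhds (half_pos hr) (half_lt_self hr))] with t ht
    have ht1 : ‖(t : ℂ)‖ < 1 := mem_ball_zero_iff.mp (hball (hofReal_mem ht).2).2
    rw [norm_real, Real.norm_of_nonneg ht.1.le] at ht1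
    exact hT.apply_sq_sub_one_ofReal ht.1 ht1
  have hmem := hofReal_mem ⟨half_pos hr, half_lt_self hr⟩
  have hEqOn := hf.eqOn_of_preconnected_of_frequently_eq hg hD hmem hfreq
  filter_upwards [inter_mem_nhdsWithin _ (Metric.ball_mem_nhds 0 hr)] with w hw using hEqOn hw

end IsChebyshev

end

theorem stmt6_general (a : ℝ) (T : ℂ → ℂ) (hT : IsChebyshev a T) :
    (fun z : ℂ => T z - ((Real.cos (a * Real.pi) : ℝ) : ℂ)
        - ((a * Real.sqrt 2 * Real.sin (a * Real.pi) : ℝ) : ℂ) * (z + 1) ^ ((1 : ℂ) / 2))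
      =O[nhdsWithin (-1 : ℂ) cutC] (fun z : ℂ => z + 1) := by
  have hsq (z : ℂ) : ((z + 1) ^ (1 / 2 : ℂ)) ^ 2 = z + 1 := by simp
  refine ((isBigO_cos_mul_arccosSqSubOne a).comp_tendsto
    (tendsto_add_one_cpow_one_div_two_cutC.mono_right nhdsWithin_le_nhds)).congr' ?_ ?_
  · filter_upwards
      [tendsto_add_one_cpow_one_div_two_cutC.eventually hT.eventually_apply_sq_sub_one_eq] with z hz
    simp only [Function.comp, ← hz, hsq, add_sub_cancel_right]
  · exact .of_forall hsq

/-- Expansion of the generalized Chebyshev function at `−1`: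
`T_a(z) = cos(aπ) + a√2 sin(aπ) √(z+1) + O(z+1)` as `z → −1` in the cut plane. -/
theorem stmt6 (a : ℝ) (ha : 0 ≤ a) (T : ℂ → ℂ) (hT : IsChebyshev a T) :
    (fun z : ℂ => T z - ((Real.cos (a * Real.pi) : ℝ) : ℂ)
        - ((a * Real.sqrt 2 * Real.sin (a * Real.pi) : ℝ) : ℂ) * (z + 1) ^ ((1 : ℂ) / 2))
      =O[nhdsWithin (-1 : ℂ) cutC] (fun z : ℂ => z + 1) :=
  stmt6_general a T hT
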